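/- For every (a,b) ∈ (1,2] × [1,2] with ab ≤ 2, the triangle T with vertices (0,0), (1,1), (2,0) is invariant under the map Ψ_{a,b}: for every (x,y) ∈ T, Ψ_{a,b}(x,y) ∈ T. -/

import Mathlib

/-!
Writing `T_c = {0 ≤ y ≤ x, x + y ≤ c}`, so that `T = T_2`, the map `Ψ_{a,b}` is `a • Ψ_{1,b}`, and
`Ψ_{1,b}` folds `T` onto `T_b` piece by piece: on each of the four pieces it is an isometry carrying
that piece into `T_b`. Scaling by `a` then carries `T_b` into `T_{ab} ⊆ T_2`.
-/

/-- The piecewise map Ψ_{a,b}. -/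
noncomputable def Psi (a b : ℝ) (p : ℝ × ℝ) : ℝ × ℝ :=
  if p.1 ≤ 1 then
    if p.1 + p.2 ≤ b then (a * p.1, a * p.2) else (a * (b - p.2), a * (b - p.1))
  else
    if 2 - b ≤ p.1 - p.2 then (a * (2 - p.1), a * p.2)
    else (a * (b - p.2), a * (b - 2 + p.1))

/-- The triangle T with vertices (0,0), (1,1), (2,0). -/
def Triangle : Set (ℝ × ℝ) := {p | 0 ≤ p.2 ∧ p.2 ≤ p.1 ∧ p.1 + p.2 ≤ 2}

def scaledTriangle (c : ℝ) : Set (ℝ × ℝ) := {p | 0 ≤ p.2 ∧ p.2 ≤ p.1 ∧ p.1 + p.2 ≤ c}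

theorem triangle_eq_scaledTriangle_two : Triangle = scaledTriangle 2 := rfl

theorem scaledTriangle_mono {c d : ℝ} (h : c ≤ d) : scaledTriangle c ⊆ scaledTriangle d :=
  fun _ ⟨hy, hyx, hsum⟩ => ⟨hy, hyx, hsum.trans h⟩

theorem smul_mem_scaledTriangle {a c : ℝ} {p : ℝ × ℝ} (ha : 0 ≤ a) (hp : p ∈ scaledTriangle c) :
    a • p ∈ scaledTriangle (a * c) := by
  obtain ⟨hy, hyx, hsum⟩ := hp
  refine ⟨mul_nonneg ha hy, mul_le_mul_of_nonneg_left hyx ha, ?_⟩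
  simpa only [Prod.smul_fst, Prod.smul_snd, smul_eq_mul, ← mul_add]
    using mul_le_mul_of_nonneg_left hsum ha

theorem Psi_eq_smul_Psi_one (a b : ℝ) (p : ℝ × ℝ) : Psi a b p = a • Psi 1 b p := by
  unfold Psi
  split_ifs <;> simp [Prod.smul_def]

theorem Psi_one_mem_scaledTriangle {b : ℝ} (hb : 1 ≤ b) {p : ℝ × ℝ} (hp : p ∈ Triangle) :
    Psi 1 b p ∈ scaledTriangle b := by
  obtain ⟨hy, hyx, hsum⟩ := hp
  unfold Psi
  split_ifs <;> refine ⟨?_, ?_, ?_⟩ <;> dsimp only <;> linarith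

theorem triangle_invariant (a b : ℝ) (ha1 : 1 < a)
    (hb1 : 1 ≤ b) (hab : a * b ≤ 2) :
    ∀ p ∈ Triangle, Psi a b p ∈ Triangle := by
  intro p hp
  rw [Psi_eq_smul_Psi_one, triangle_eq_scaledTriangle_two]
  exact scaledTriangle_mono hab
    (smul_mem_scaledTriangle (by linarith) (Psi_one_mem_scaledTriangle hb1 hp))
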